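/- arXiv:2603.23348 — 4 statements merged into one kernel-verified Lean document; each statement's English description precedes it below -/
import Mathlib

section
/- Let (U,d) be a metric space, X a finite nonempty subset, k a positive integer, and W ⊆ X a set of k+1 points such that any two distinct points of W are at distance strictly greater than 2γ. Then the optimal k-center radius of X, i.e. the minimum over all C ⊆ X with |C| ≤ k of max_{p∈X} min_{c∈C} d(p,c), is strictly greater than γ. -/
noncomputable def coverRadius {U : Type*} [MetricSpace U] (X C : Finset U)
    (hX : X.Nonempty) : ℝ :=
  X.sup' hX fun p => Metric.infDist p (C : Set U)

noncomputable def optRadius {U : Type*} [MetricSpace U] (k : ℕ) (X : Finset U)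
    (hX : X.Nonempty) : ℝ :=
  sInf {r : ℝ | ∃ C : Finset U, C ⊆ X ∧ C.Nonempty ∧ C.card ≤ k ∧
    r = X.sup' hX fun p => Metric.infDist p (C : Set U)}

theorem stmt_0 {U : Type*} [MetricSpace U] (X W : Finset U) (hX : X.Nonempty)
    (k : ℕ) (hk : 1 ≤ k) (γ : ℝ)
    (hWX : W ⊆ X) (hWcard : W.card = k + 1)
    (hsep : ∀ p ∈ W, ∀ q ∈ W, p ≠ q → 2 * γ < dist p q) :
    γ < optRadius k X hX := by
  set S := {r : ℝ | ∃ C : Finset U, C ⊆ X ∧ C.Nonempty ∧ C.card ≤ k ∧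
    r = X.sup' hX fun p => Metric.infDist p (C : Set U)} with hS
  have hSne : S.Nonempty := by
    obtain ⟨x, hx⟩ := hX
    exact ⟨_, {x}, Finset.singleton_subset_iff.2 hx, Finset.singleton_nonempty x,
      by simpa using hk, rfl⟩
  have hSfin : S.Finite := by
    apply Set.Finite.subset (Finset.finite_toSet
      (X.powerset.image fun C : Finset U => X.sup' hX fun p => Metric.infDist p (C : Set U)))
    rintro r ⟨C, hCX, -, -, rfl⟩
    simp only [Finset.coe_image, Set.mem_image, Finset.mem_coe, Finset.mem_powerset]
    exact ⟨C, hCX, rfl⟩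
  have hmem : sInf S ∈ S := hSne.csInf_mem hSfin
  obtain ⟨C, hCX, hCne, hCcard, hr⟩ := hmem
  -- nearest center map
  have hchoice : ∀ w : U, ∃ c ∈ C, Metric.infDist w (C : Set U) = dist w c := by
    intro w
    obtain ⟨c, hc, hd⟩ := C.finite_toSet.isCompact.exists_infDist_eq_dist
      (by exact_mod_cast hCne) w
    exact ⟨c, hc, hd⟩
  choose f hfC hfd using hchoice
  obtain ⟨p, hp, q, hq, hpq, hfpq⟩ :=
    Finset.exists_ne_map_eq_of_card_lt_of_maps_to
      (s := W) (t := C) (by omega) (fun w _ => hfC w)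
  have hbound : ∀ w ∈ W, Metric.infDist w (C : Set U) ≤ sInf S := by
    intro w hw
    rw [hr]
    exact Finset.le_sup' (fun p => Metric.infDist p (C : Set U)) (hWX hw)
  have h1 : dist p q ≤ 2 * sInf S := by
    calc dist p q ≤ dist p (f p) + dist (f q) q := by
          rw [hfpq]; exact dist_triangle _ _ _
      _ = Metric.infDist p (C : Set U) + Metric.infDist q (C : Set U) := by
          rw [dist_comm (f q) q, ← hfd p, ← hfd q]
      _ ≤ sInf S + sInf S := add_le_add (hbound p hp) (hbound q hq)
      _ = 2 * sInf S := by ring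
  have := lt_of_lt_of_le (hsep p hp q hq hpq) h1
  unfold optRadius
  linarith
end

section
/- Let (U,d) be a metric space, X a finite nonempty set, and k ≥ 1. For any nonempty subset S ⊆ X, the optimal k-center radius of S (with centers required to lie in S) satisfies r_k*(S) ≤ 2·r_k*(X). -/
theorem stmt_10 {U : Type*} [MetricSpace U] (X S : Finset U) (hX : X.Nonempty)
    (hS : S.Nonempty) (k : ℕ) (hk : 1 ≤ k) (hSX : S ⊆ X) :
    optRadius k S hS ≤ 2 * optRadius k X hX := by
  classical
  set AX := {r : ℝ | ∃ C : Finset U, C ⊆ X ∧ C.Nonempty ∧ C.card ≤ k ∧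
    r = X.sup' hX fun p => Metric.infDist p (C : Set U)} with hAX
  set AS := {r : ℝ | ∃ C : Finset U, C ⊆ S ∧ C.Nonempty ∧ C.card ≤ k ∧
    r = S.sup' hS fun p => Metric.infDist p (C : Set U)} with hAS
  have hbdd : BddBelow AS := by
    refine ⟨0, fun r hr => ?_⟩
    obtain ⟨C, _, _, _, rfl⟩ := hr
    obtain ⟨s, hs⟩ := hS
    exact le_trans (Metric.infDist_nonneg) (Finset.le_sup' (fun p => Metric.infDist p (C : Set U)) hs)
  have hXne : AX.Nonempty := by
    obtain ⟨x, hx⟩ := hX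
    exact ⟨_, {x}, by simpa using hx, Finset.singleton_nonempty x,
      by simpa using hk, rfl⟩
  -- key step
  have key : ∀ r ∈ AX, optRadius k S hS ≤ 2 * r := by
    rintro r ⟨C, hCX, hCne, hCcard, rfl⟩
    set r := X.sup' hX fun p => Metric.infDist p (C : Set U) with hrdef
    have hCcompact : IsCompact (C : Set U) := C.finite_toSet.isCompact
    have hCne' : (C : Set U).Nonempty := by exact_mod_cast hCne
    choose near hnearC hneard using fun p : U =>
      hCcompact.exists_infDist_eq_dist hCne' p
    have hrb : ∀ p ∈ X, Metric.infDist p (C : Set U) ≤ r :=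
      fun p hp => Finset.le_sup' (fun p => Metric.infDist p (C : Set U)) hp
    have hrep : ∀ c ∈ S.image near, ∃ s ∈ S, near s = c := by
      intro c hc
      simpa using Finset.mem_image.mp hc
    choose rep hrepS hrepn using hrep
    set C' : Finset U := (S.image near).attach.image (fun c => rep c.1 c.2) with hC'
    have hC'S : C' ⊆ S := by
      intro x hx
      obtain ⟨⟨c, hc⟩, _, rfl⟩ := Finset.mem_image.mp hx
      exact hrepS c hc
    have himgC : S.image near ⊆ C := by
      intro c hc
      obtain ⟨s, _, rfl⟩ := Finset.mem_image.mp hc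
      exact hnearC s
    have hC'card : C'.card ≤ k :=
      le_trans (le_trans Finset.card_image_le (by
        rw [Finset.card_attach]; exact Finset.card_le_card himgC)) hCcard
    have hC'ne : C'.Nonempty := by
      apply Finset.Nonempty.image
      exact Finset.attach_nonempty_iff.mpr (hS.image _)
    have hcov : ∀ p ∈ S, Metric.infDist p (C' : Set U) ≤ 2 * r := by
      intro p hp
      have hc : near p ∈ S.image near := Finset.mem_image_of_mem _ hp
      set q := rep (near p) hc with hq
      have hqC' : q ∈ C' := Finset.mem_image.mpr ⟨⟨near p, hc⟩, Finset.mem_attach _ _, rfl⟩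
      have h1 : Metric.infDist p (C' : Set U) ≤ dist p q :=
        Metric.infDist_le_dist_of_mem (by exact_mod_cast hqC')
      have h2 : dist p q ≤ dist p (near p) + dist (near p) q := dist_triangle _ _ _
      have h3 : dist p (near p) ≤ r := (hneard p) ▸ hrb p (hSX hp)
      have h4 : dist (near p) q ≤ r := by
        have hqn : near q = near p := hrepn (near p) hc
        have := hrb q (hSX (hrepS (near p) hc))
        rw [hneard q, hqn, dist_comm] at this
        exact this
      linarith
    have : (S.sup' hS fun p => Metric.infDist p (C' : Set U)) ∈ AS :=
      ⟨C', hC'S, hC'ne, hC'card, rfl⟩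
    calc optRadius k S hS ≤ S.sup' hS fun p => Metric.infDist p (C' : Set U) :=
          csInf_le hbdd this
      _ ≤ 2 * r := Finset.sup'_le _ _ hcov
  have h2 : optRadius k S hS / 2 ≤ optRadius k X hX :=
    le_csInf hXne (fun r hr => by linarith [key r hr])
  linarith
end

section
/- Let (U,d) be a metric space, X a finite set, k ≥ 1, γ > 0, and suppose X is partitioned into sets D_1,…,D_ℓ and U₀ with ℓ ≤ k, together with centers c_1,…,c_ℓ where c_i ∈ D_i, such that d(x, c_i) ≤ 2γ for every x ∈ D_i, d(x, c_i) > 2γ for every x ∈ U₀ and every i, d(c_i, c_j) > 2γ for i ≠ j, and U₀ ≠ ∅ implies ℓ = k. Then either (a) U₀ = ∅ and r_{C}(X) ≤ 2γ for C = {c_1,…,c_ℓ}, or (b) U₀ ≠ ∅ and r_k*(X) > γ. -/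
set_option maxHeartbeats 1000000


theorem stmt_14 {U : Type*} [MetricSpace U] [DecidableEq U]
    (X : Finset U) (hX : X.Nonempty) (k ℓ : ℕ) (hk : 1 ≤ k) (hℓ : ℓ ≤ k)
    (γ : ℝ) (hγ : 0 < γ) (D : Fin ℓ → Finset U) (U₀ : Finset U) (c : Fin ℓ → U)
    (hcD : ∀ i, c i ∈ D i)
    (hpart : X = U₀ ∪ Finset.univ.biUnion D)
    (hdisjD : ∀ i j : Fin ℓ, i ≠ j → Disjoint (D i) (D j))
    (hdisjU : ∀ i : Fin ℓ, Disjoint (D i) U₀)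
    (hclose : ∀ i : Fin ℓ, ∀ x ∈ D i, dist x (c i) ≤ 2 * γ)
    (hfar : ∀ x ∈ U₀, ∀ i : Fin ℓ, 2 * γ < dist x (c i))
    (hcsep : ∀ i j : Fin ℓ, i ≠ j → 2 * γ < dist (c i) (c j))
    (hfull : U₀.Nonempty → ℓ = k) :
    (U₀ = ∅ ∧ coverRadius X (Finset.univ.image c) hX ≤ 2 * γ) ∨
      (U₀ ≠ ∅ ∧ γ < optRadius k X hX) := by
  rcases U₀.eq_empty_or_nonempty with h0 | h0
  · left
    refine ⟨h0, Finset.sup'_le _ _ fun x hx => ?_⟩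
    rw [hpart, h0, Finset.empty_union, Finset.mem_biUnion] at hx
    obtain ⟨i, -, hxi⟩ := hx
    calc Metric.infDist x (↑(Finset.univ.image c) : Set U) ≤ dist x (c i) :=
          Metric.infDist_le_dist_of_mem (by
            simp only [Finset.coe_image, Set.mem_image, Finset.mem_coe]
            exact ⟨i, Finset.mem_univ i, rfl⟩)
      _ ≤ 2 * γ := hclose i x hxi
  · right
    refine ⟨Finset.nonempty_iff_ne_empty.mp h0, ?_⟩
    obtain ⟨x₀, hx₀⟩ := h0
    have hℓk := hfull ⟨x₀, hx₀⟩
    set P : Finset U := insert x₀ (Finset.univ.image c) with hP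
    have hPdist : ∀ p ∈ P, ∀ q ∈ P, p ≠ q → 2 * γ < dist p q := by
      intro p hp q hq hpq
      simp only [hP, Finset.mem_insert, Finset.mem_image, Finset.mem_univ, true_and] at hp hq
      rcases hp with hp | ⟨i, hpi⟩ <;> rcases hq with hq | ⟨j, hqj⟩
      · exact absurd (hp.trans hq.symm) hpq
      · rw [hp, ← hqj]; exact hfar x₀ hx₀ j
      · rw [hq, ← hpi, dist_comm]; exact hfar x₀ hx₀ i
      · rw [← hpi, ← hqj]; exact hcsep i j fun h => hpq (by rw [← hpi, ← hqj, h])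
    have hPX : P ⊆ X := by
      intro p hp
      rw [hpart]
      simp only [hP, Finset.mem_insert, Finset.mem_image, Finset.mem_univ, true_and] at hp
      rcases hp with hp | ⟨i, hpi⟩
      · rw [hp]; exact Finset.mem_union_left _ hx₀
      · rw [← hpi]
        exact Finset.mem_union_right _ (Finset.mem_biUnion.mpr ⟨i, Finset.mem_univ i, hcD i⟩)
    have hcinj : Function.Injective c := by
      intro i j hij
      by_contra h
      have := hcsep i j h
      rw [hij, dist_self] at this; linarith
    have hx₀ni : x₀ ∉ Finset.univ.image c := by
      simp only [Finset.mem_image, Finset.mem_univ, true_and, not_exists]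
      intro i h
      have := hfar x₀ hx₀ i
      rw [← h, dist_self] at this; linarith
    have hPcard : P.card = k + 1 := by
      rw [hP, Finset.card_insert_of_notMem hx₀ni,
        Finset.card_image_of_injective _ hcinj, Finset.card_univ, Fintype.card_fin, hℓk]
    have hℓpos : 0 < ℓ := by omega
    have hi0 : c ⟨0, hℓpos⟩ ∈ P := by
      simp only [hP, Finset.mem_insert, Finset.mem_image, Finset.mem_univ, true_and]
      exact Or.inr ⟨⟨0, hℓpos⟩, rfl⟩
    have hx₀P : x₀ ∈ P := Finset.mem_insert_self _ _
    have hne : x₀ ≠ c ⟨0, hℓpos⟩ := by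
      intro h
      have := hfar x₀ hx₀ ⟨0, hℓpos⟩
      rw [← h, dist_self] at this; linarith
    have hpairsne : ((P ×ˢ P).filter fun pq => pq.1 ≠ pq.2).Nonempty :=
      ⟨(x₀, c ⟨0, hℓpos⟩), by
        simp only [Finset.mem_filter, Finset.mem_product]
        exact ⟨⟨hx₀P, hi0⟩, hne⟩⟩
    set m : ℝ := ((P ×ˢ P).filter fun pq => pq.1 ≠ pq.2).inf' hpairsne
        (fun pq => dist pq.1 pq.2) with hm
    have hmγ : 2 * γ < m := by
      rw [hm, Finset.lt_inf'_iff]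
      rintro ⟨p, q⟩ hpq
      simp only [Finset.mem_filter, Finset.mem_product] at hpq
      exact hPdist p hpq.1.1 q hpq.1.2 hpq.2
    have hlb : ∀ r ∈ {r : ℝ | ∃ C : Finset U, C ⊆ X ∧ C.Nonempty ∧ C.card ≤ k ∧
        r = X.sup' hX fun p => Metric.infDist p (C : Set U)}, m / 2 ≤ r := by
      rintro r ⟨C, hCX, hCne, hCcard, rfl⟩
      set r := X.sup' hX fun p => Metric.infDist p (C : Set U)
      have hach : ∀ p ∈ P, ∃ n ∈ C, dist p n ≤ r := by
        intro p hp
        obtain ⟨n, hn, hdist⟩ := (C.finite_toSet.isCompact).exists_infDist_eq_dist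
          (by exact_mod_cast hCne) p
        exact ⟨n, by exact_mod_cast hn, by
          rw [← hdist]
          exact Finset.le_sup' (fun p => Metric.infDist p (C : Set U)) (hPX hp)⟩
      choose! g hg1 hg2 using hach
      obtain ⟨p, hp, q, hq, hpq, hgeq⟩ :=
        Finset.exists_ne_map_eq_of_card_lt_of_maps_to
          (by rw [hPcard]; omega) fun a ha => hg1 a ha
      have hmem : (p, q) ∈ (P ×ˢ P).filter fun pq => pq.1 ≠ pq.2 := by
        simp only [Finset.mem_filter, Finset.mem_product]
        exact ⟨⟨hp, hq⟩, hpq⟩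
      have hmle : m ≤ dist p q := Finset.inf'_le (fun pq => dist pq.1 pq.2) hmem
      have : dist p q ≤ r + r := by
        calc dist p q ≤ dist p (g p) + dist (g p) q := dist_triangle _ _ _
          _ = dist p (g p) + dist q (g p) := by rw [dist_comm (g p) q]
          _ = dist p (g p) + dist q (g q) := by rw [hgeq]
          _ ≤ r + r := add_le_add (hg2 p hp) (hg2 q hq)
      linarith
    have hSne : ∃ r, r ∈ {r : ℝ | ∃ C : Finset U, C ⊆ X ∧ C.Nonempty ∧ C.card ≤ k ∧
        r = X.sup' hX fun p => Metric.infDist p (C : Set U)} := by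
      obtain ⟨x, hx⟩ := hX
      exact ⟨_, ⟨{x}, Finset.singleton_subset_iff.mpr hx, Finset.singleton_nonempty x,
        by simpa using hk, rfl⟩⟩
    have := le_csInf hSne hlb
    unfold optRadius
    linarith
end

section
/- Let (U,d) be a metric space, X a finite nonempty subset, k ≥ 1, β > 0, and let Γ be a finite set of positive reals such that for some γ' ∈ Γ and γ* ∈ Γ with γ* = (1+β)·γ' it holds that: there exist k+1 points of X at pairwise distance > 2γ', and there exists C ⊆ X with |C| ≤ k and r_C(X) ≤ 2γ*. Then r_C(X) ≤ 2(1+β)·r_k*(X). -/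
theorem stmt_17 {U : Type*} [MetricSpace U] (X C : Finset U) (hX : X.Nonempty)
    (k : ℕ) (hk : 1 ≤ k) (β : ℝ) (hβ : 0 < β)
    (Γ : Finset ℝ) (hΓpos : ∀ γ ∈ Γ, (0:ℝ) < γ)
    (γ' γs : ℝ) (hγ' : γ' ∈ Γ) (hγs : γs ∈ Γ) (hrel : γs = (1 + β) * γ')
    (hwit : ∃ S : Finset U, S ⊆ X ∧ S.card = k + 1 ∧
      ∀ p ∈ S, ∀ q ∈ S, p ≠ q → 2 * γ' < dist p q)
    (hCX : C ⊆ X) (hCcard : C.card ≤ k)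
    (hcov : coverRadius X C hX ≤ 2 * γs) :
    coverRadius X C hX ≤ 2 * (1 + β) * optRadius k X hX := by
  obtain ⟨S, hSX, hScard, hSsep⟩ := hwit
  set T : Set ℝ := {r : ℝ | ∃ C : Finset U, C ⊆ X ∧ C.Nonempty ∧ C.card ≤ k ∧
    r = X.sup' hX fun p => Metric.infDist p (C : Set U)} with hT
  obtain ⟨x, hx⟩ := id hX
  have hTne : T.Nonempty := by
    refine ⟨X.sup' hX fun p => Metric.infDist p (({x} : Finset U) : Set U), {x}, ?_, ?_, ?_, rfl⟩
    · simpa using hx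
    · simp
    · simpa using hk
  have hlb : ∀ r ∈ T, γ' ≤ r := by
    rintro r ⟨C', hC'X, hC'ne, hC'card, rfl⟩
    -- each point of S has a closest point in C'
    obtain ⟨c0, hc0⟩ := hC'ne
    have hclose : ∀ s : U, ∃ c, c ∈ C' ∧ (s ∈ S → dist s c ≤
        X.sup' hX fun p => Metric.infDist p (C' : Set U)) := by
      intro s
      by_cases hs : s ∈ S
      · obtain ⟨c, hc, hceq⟩ := (C'.finite_toSet.isCompact).exists_infDist_eq_dist
          ⟨c0, hc0⟩ s
        exact ⟨c, hc, fun _ => by rw [← hceq]; exact Finset.le_sup' (fun p => Metric.infDist p (C' : Set U)) (hSX hs)⟩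
      · exact ⟨c0, hc0, fun h => absurd h hs⟩
    have hcardlt : C'.card < S.card := by omega
    choose f hf hfd using hclose
    obtain ⟨p, hp, q, hq, hpq, hfeq⟩ :=
      Finset.exists_ne_map_eq_of_card_lt_of_maps_to hcardlt (fun s _ => hf s)
    have hsep := hSsep p hp q hq hpq
    have htri : dist p q ≤ dist p (f p) + dist q (f q) := by
      calc dist p q ≤ dist p (f p) + dist (f p) q := dist_triangle _ _ _
        _ = dist p (f p) + dist q (f q) := by rw [hfeq, dist_comm (f q) q]
    nlinarith [hfd p hp, hfd q hq]
  have hγopt : γ' ≤ optRadius k X hX := le_csInf hTne hlb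
  have hγ'pos := hΓpos γ' hγ'
  have h1 : coverRadius X C hX ≤ 2 * (1 + β) * γ' := by
    rw [hrel] at hcov; linarith
  nlinarith
end
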